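/- arXiv:1010.0482 — 2 statements merged into one kernel-verified Lean document; each statement's English description precedes it below -/
import Mathlib

section
/- Let n ≥ 1 and let M be an n×n matrix all of whose entries are positive integers such that 1 is not an eigenvalue of M (equivalently, det(M − I_n) ≠ 0). Then for every λ = (λ_1, …, λ_n) ∈ (ℝ∖{0})^n there exists μ = (μ_1, …, μ_n) ∈ (0, ∞)^n such that for every i and every x ∈ ℝ^n, μ_i^{−1} · λ_i · ∏_{j=1}^n (μ_j x_j)^{M_{ij}} = sgn(λ_i) · ∏_{j=1}^n x_j^{M_{ij}}; that is, conjugating the monomial map x ↦ (λ_i ∏_j x_j^{M_{ij}})_i by the diagonal linear map x ↦ (μ_i x_i)_i replaces the coefficient vector λ by the vector of signs (sgn(λ_1), …, sgn(λ_n)) ∈ {−1, 1}^n. -/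
/-- If `M` is an `n × n` matrix of positive integers with `1` not an
eigenvalue (i.e. `det (M - I) ≠ 0`), then for any coefficient vector `λ` of nonzero
reals there is a vector `μ` of positive reals such that conjugating the monomial map
`x ↦ (λ_i ∏_j x_j ^ M i j)_i` by the diagonal map `x ↦ (μ_i x_i)_i` replaces `λ` by
the vector of signs `(sgn λ_1, …, sgn λ_n)`. -/
theorem monomial_coefficients_normalizable_to_signs
    (n : ℕ) (hn : 1 ≤ n) (M : Matrix (Fin n) (Fin n) ℕ)
    (hpos : ∀ i j, 0 < M i j)
    (hdet : (M.map (fun k : ℕ => (k : ℝ)) - 1).det ≠ 0)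
    (lam : Fin n → ℝ) (hlam : ∀ i, lam i ≠ 0) :
    ∃ μ : Fin n → ℝ, (∀ i, 0 < μ i) ∧
      ∀ (i : Fin n) (x : Fin n → ℝ),
        (μ i)⁻¹ * lam i * ∏ j, (μ j * x j) ^ M i j
          = Real.sign (lam i) * ∏ j, x j ^ M i j := by
  set A : Matrix (Fin n) (Fin n) ℝ := M.map (fun k : ℕ => (k : ℝ)) - 1 with hA
  have hinv : IsUnit A.det := isUnit_iff_ne_zero.mpr hdet
  set b : Fin n → ℝ := fun i => - Real.log |lam i| with hb
  set t : Fin n → ℝ := A⁻¹.mulVec b with ht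
  have hAt : A.mulVec t = b := by
    rw [ht, Matrix.mulVec_mulVec, Matrix.mul_nonsing_inv A hinv, Matrix.one_mulVec]
  refine ⟨fun i => Real.exp (t i), fun i => Real.exp_pos _, fun i x => ?_⟩
  have key : (Real.exp (t i))⁻¹ * |lam i| * ∏ j, (Real.exp (t j)) ^ M i j = 1 := by
    have hAti : ∑ j, A i j * t j = b i := by
      have := congrFun hAt i
      simpa [Matrix.mulVec, dotProduct] using this
    have hsum : (∑ j, (M i j : ℝ) * t j) - t i = - Real.log |lam i| := by
      have : ∑ j, A i j * t j = ∑ j, ((M i j : ℝ) * t j - (if i = j then 1 else 0) * t j) := by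
        apply Finset.sum_congr rfl
        intro j _
        simp [hA, Matrix.sub_apply, Matrix.one_apply, sub_mul]
      rw [this, Finset.sum_sub_distrib] at hAti
      simpa [Finset.sum_ite_eq, hb] using hAti
    have habs : |lam i| = Real.exp (Real.log |lam i|) :=
      (Real.exp_log (abs_pos.mpr (hlam i))).symm
    rw [habs]
    have : ∏ j, (Real.exp (t j)) ^ M i j = Real.exp (∑ j, (M i j : ℝ) * t j) := by
      rw [Real.exp_sum]
      exact Finset.prod_congr rfl fun j _ => by rw [← Real.exp_nat_mul]
    rw [this, ← Real.exp_neg, ← Real.exp_add, ← Real.exp_add]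
    rw [← Real.exp_zero]
    congr 1
    linarith [hsum]
  calc (Real.exp (t i))⁻¹ * lam i * ∏ j, (Real.exp (t j) * x j) ^ M i j
      = (Real.sign (lam i)) * ((Real.exp (t i))⁻¹ * |lam i| * ∏ j, (Real.exp (t j)) ^ M i j)
          * ∏ j, x j ^ M i j := by
        have hsgn : Real.sign (lam i) * |lam i| = lam i := by
          rcases (hlam i).lt_or_gt with h | h
          · rw [Real.sign_of_neg h, abs_of_neg h]; ring
          · rw [Real.sign_of_pos h, abs_of_pos h]; ring
        have hprod : ∏ j, (Real.exp (t j) * x j) ^ M i j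
            = (∏ j, (Real.exp (t j)) ^ M i j) * ∏ j, x j ^ M i j := by
          rw [← Finset.prod_mul_distrib]
          exact Finset.prod_congr rfl fun j _ => mul_pow _ _ _
        conv_lhs => rw [← hsgn]
        rw [hprod]
        ring
    _ = Real.sign (lam i) * ∏ j, x j ^ M i j := by rw [key]; ring
end

section
/- Let S ⊆ ℝ be a finite union of singletons and nonempty open intervals (the intervals may be bounded or unbounded). If S is invariant under translation by 1, i.e. S = { x + 1 : x ∈ S }, then S = ∅ or S = ℝ. -/
/-- A subset of `ℝ` that is a finite union of singletons and nonempty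
open intervals and is invariant under translation by `1` is empty or all of `ℝ`. -/
theorem translation_invariant_finite_union_of_points_and_intervals
    (S : Set ℝ) (F : Finset ℝ) (I : Finset (Set ℝ))
    (hI : ∀ J ∈ I,
      (∃ a b : ℝ, a < b ∧ J = Set.Ioo a b) ∨ (∃ b : ℝ, J = Set.Iio b) ∨
      (∃ a : ℝ, J = Set.Ioi a) ∨ J = Set.univ)
    (hS : S = ↑F ∪ ⋃ J ∈ I, J)
    (hinv : (fun x : ℝ => x + 1) '' S = S) :
    S = ∅ ∨ S = Set.univ := by
  have hup : ∀ x ∈ S, x + 1 ∈ S := by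
    intro x hx
    rw [← hinv]; exact ⟨x, hx, rfl⟩
  have hdown : ∀ x ∈ S, x - 1 ∈ S := by
    intro x hx
    rw [← hinv] at hx
    obtain ⟨y, hy, hyx⟩ := hx
    have : x - 1 = y := by simp at hyx; linarith
    rwa [this]
  have hupn : ∀ x ∈ S, ∀ n : ℕ, x + n ∈ S := by
    intro x hx n
    induction n with
    | zero => simpa using hx
    | succ n ih =>
      have h := hup _ ih
      have : x + (↑(n + 1) : ℝ) = x + n + 1 := by push_cast; ring
      rwa [this]
  have hdownn : ∀ x ∈ S, ∀ n : ℕ, x - n ∈ S := by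
    intro x hx n
    induction n with
    | zero => simpa using hx
    | succ n ih =>
      have h := hdown _ ih
      have : x - (↑(n + 1) : ℝ) = x - n - 1 := by push_cast; ring
      rwa [this]
  by_cases hub : ∃ J ∈ I, (∃ b : ℝ, J = Set.Iio b) ∨ (∃ a : ℝ, J = Set.Ioi a) ∨ J = Set.univ
  · -- some unbounded interval: S = univ
    right
    obtain ⟨J, hJI, hJ⟩ := hub
    have hJS : J ⊆ S := by
      rw [hS]
      intro y hy
      exact Or.inr (Set.mem_biUnion hJI hy)
    rw [Set.eq_univ_iff_forall]
    intro x
    rcases hJ with ⟨b, rfl⟩ | ⟨a, rfl⟩ | rfl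
    · -- Iio b : go down then back up
      obtain ⟨n, hn⟩ := exists_nat_gt (x - b)
      have hmem : x - n ∈ S := hJS (by simp only [Set.mem_Iio]; linarith)
      have := hupn _ hmem n
      simpa using this
    · -- Ioi a : go up then back down
      obtain ⟨n, hn⟩ := exists_nat_gt (a - x)
      have hmem : x + n ∈ S := hJS (by simp only [Set.mem_Ioi]; linarith)
      have := hdownn _ hmem n
      simpa using this
    · exact hJS (Set.mem_univ x)
  · -- all intervals bounded above: S bounded above, hence empty
    left
    push_neg at hub
    have hbdd : BddAbove S := by
      rw [hS]
      apply BddAbove.union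
      · exact F.finite_toSet.bddAbove
      · have hcoe : (⋃ J ∈ I, J) = ⋃ J ∈ (↑I : Set (Set ℝ)), J := by simp
        rw [hcoe, Set.Finite.bddAbove_biUnion I.finite_toSet]
        intro J hJ
        rcases hI J hJ with ⟨a, b, _, rfl⟩ | h | h | h
        · exact bddAbove_Ioo
        · obtain ⟨b, rfl⟩ := h; exact absurd rfl ((hub _ hJ).1 b)
        · obtain ⟨a, rfl⟩ := h; exact absurd rfl ((hub _ hJ).2.1 a)
        · exact absurd h (hub _ hJ).2.2
    by_contra hne
    obtain ⟨x, hx⟩ := Set.nonempty_iff_ne_empty.mpr hne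
    obtain ⟨B, hB⟩ := hbdd
    obtain ⟨n, hn⟩ := exists_nat_gt (B - x)
    have : x + n ≤ B := hB (hupn _ hx n)
    linarith
end
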